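/- In P = ℂ[a,b,c,d,e] with the bracket determined by the stated table, set H' = e − ab/2, E' = d/2 − b²/4, F' = −c/2 + a²/4. Then {H',E'} = 2E', {H',F'} = −2F', {E',F'} = H', and {H',a} = {H',b} = {E',a} = {E',b} = {F',a} = {F',b} = 0, while {a,b} = 2. (Hence a, b generate a Poisson subalgebra isomorphic to S(h(3))/(Z−2) which Poisson-commutes with the copy of S(sl₂) generated by H', E', F'.) -/
import Mathlib


open MvPolynomial

noncomputable section

/-- The variables a, b, c, d, e of P = ℂ[a,b,c,d,e] are `X 0, X 1, X 2, X 3, X 4`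
in `MvPolynomial (Fin 5) ℂ`.  `brTable u v` is the table of brackets of generators:
{a,b} = 2, {a,c} = 0, {a,d} = 2b, {a,e} = a, {b,c} = −2a, {b,d} = 0, {b,e} = −b,
{c,d} = 4e, {c,e} = 2c, {d,e} = −2d, extended antisymmetrically. -/
def brTable : Fin 5 → Fin 5 → MvPolynomial (Fin 5) ℂ :=
  ![![0,        2,        0,          2 * X 1,    X 0],
    ![-2,       0,        -(2 * X 0), 0,          -(X 1)],
    ![0,        2 * X 0,  0,          4 * X 4,    2 * X 2],
    ![-(2 * X 1), 0,      -(4 * X 4), 0,          -(2 * X 3)],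
    ![-(X 0),   X 1,      -(2 * X 2), 2 * X 3,    0]]

/-- The Poisson bracket on P = ℂ[a,b,c,d,e] determined by the table:
{f,g} = Σ_{u,v} {u,v}·(∂f/∂u)·(∂g/∂v). -/
def pb5 (f g : MvPolynomial (Fin 5) ℂ) : MvPolynomial (Fin 5) ℂ :=
  ∑ u : Fin 5, ∑ v : Fin 5, brTable u v * pderiv u f * pderiv v g

/-- H' = e − ab/2. -/
def H' : MvPolynomial (Fin 5) ℂ := X 4 - C (1 / 2 : ℂ) * (X 0 * X 1)

/-- E' = d/2 − b²/4. -/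
def E' : MvPolynomial (Fin 5) ℂ := C (1 / 2 : ℂ) * X 3 - C (1 / 4 : ℂ) * X 1 ^ 2

/-- F' = −c/2 + a²/4. -/
def F' : MvPolynomial (Fin 5) ℂ := -(C (1 / 2 : ℂ) * X 2) + C (1 / 4 : ℂ) * X 0 ^ 2

/-!
STATEMENT 18: in P = ℂ[a,b,c,d,e] with the bracket determined by the table,
with H' = e − ab/2, E' = d/2 − b²/4, F' = −c/2 + a²/4 one has
{H',E'} = 2E', {H',F'} = −2F', {E',F'} = H',
{H',a} = {H',b} = {E',a} = {E',b} = {F',a} = {F',b} = 0, and {a,b} = 2.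
-/

lemma pdH0 : pderiv 0 H' = -(C (1/2:ℂ) * X 1) := by
  simp [H', pderiv_mul, pderiv_X_self, pderiv_X_of_ne (show (1:Fin 5) ≠ 0 by decide),
    pderiv_X_of_ne (show (4:Fin 5) ≠ 0 by decide)]
lemma pdH1 : pderiv 1 H' = -(C (1/2:ℂ) * X 0) := by
  simp [H', pderiv_mul, pderiv_X_self, pderiv_X_of_ne (show (0:Fin 5) ≠ 1 by decide),
    pderiv_X_of_ne (show (4:Fin 5) ≠ 1 by decide)]
lemma pdH2 : pderiv 2 H' = 0 := by
  simp [H', pderiv_mul, pderiv_X_of_ne (show (0:Fin 5) ≠ 2 by decide),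
    pderiv_X_of_ne (show (1:Fin 5) ≠ 2 by decide), pderiv_X_of_ne (show (4:Fin 5) ≠ 2 by decide)]
lemma pdH3 : pderiv 3 H' = 0 := by
  simp [H', pderiv_mul, pderiv_X_of_ne (show (0:Fin 5) ≠ 3 by decide),
    pderiv_X_of_ne (show (1:Fin 5) ≠ 3 by decide), pderiv_X_of_ne (show (4:Fin 5) ≠ 3 by decide)]
lemma pdH4 : pderiv 4 H' = 1 := by
  simp [H', pderiv_mul, pderiv_X_self, pderiv_X_of_ne (show (0:Fin 5) ≠ 4 by decide),
    pderiv_X_of_ne (show (1:Fin 5) ≠ 4 by decide)]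

lemma pdE0 : pderiv 0 E' = 0 := by
  simp [E', pow_two, pderiv_mul, pderiv_X_of_ne (show (1:Fin 5) ≠ 0 by decide),
    pderiv_X_of_ne (show (3:Fin 5) ≠ 0 by decide)]
lemma pdE1 : pderiv 1 E' = -(C (1/2:ℂ) * X 1) := by
  have h : (C (1/4:ℂ) : MvPolynomial (Fin 5) ℂ) * X 1 + C (1/4) * X 1 = C (1/2) * X 1 := by
    rw [← add_mul, ← C_add]; norm_num
  simp only [E', map_sub, pow_two, pderiv_mul, pderiv_X_self,
    pderiv_X_of_ne (show (3:Fin 5) ≠ 1 by decide), pderiv_C, pderiv_C_mul, mul_one, one_mul,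
    mul_zero, zero_mul, zero_add, zero_sub, mul_add, h]
lemma pdE2 : pderiv 2 E' = 0 := by
  simp [E', pow_two, pderiv_mul, pderiv_X_of_ne (show (1:Fin 5) ≠ 2 by decide),
    pderiv_X_of_ne (show (3:Fin 5) ≠ 2 by decide)]
lemma pdE3 : pderiv 3 E' = C (1/2:ℂ) := by
  simp [E', pow_two, pderiv_mul, pderiv_X_self, pderiv_X_of_ne (show (1:Fin 5) ≠ 3 by decide)]
lemma pdE4 : pderiv 4 E' = 0 := by
  simp [E', pow_two, pderiv_mul, pderiv_X_of_ne (show (1:Fin 5) ≠ 4 by decide),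
    pderiv_X_of_ne (show (3:Fin 5) ≠ 4 by decide)]

lemma pdF0 : pderiv 0 F' = C (1/2:ℂ) * X 0 := by
  have h : (C (1/4:ℂ) : MvPolynomial (Fin 5) ℂ) * X 0 + C (1/4) * X 0 = C (1/2) * X 0 := by
    rw [← add_mul, ← C_add]; norm_num
  simp only [F', map_add, map_neg, pow_two, pderiv_mul, pderiv_X_self,
    pderiv_X_of_ne (show (2:Fin 5) ≠ 0 by decide), pderiv_C, pderiv_C_mul, mul_one, one_mul,
    mul_zero, zero_mul, zero_add, neg_zero, mul_add, h]
lemma pdF1 : pderiv 1 F' = 0 := by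
  simp [F', pow_two, pderiv_mul, pderiv_X_of_ne (show (0:Fin 5) ≠ 1 by decide),
    pderiv_X_of_ne (show (2:Fin 5) ≠ 1 by decide)]
lemma pdF2 : pderiv 2 F' = -C (1/2:ℂ) := by
  simp [F', pow_two, pderiv_mul, pderiv_X_self, pderiv_X_of_ne (show (0:Fin 5) ≠ 2 by decide)]
lemma pdF3 : pderiv 3 F' = 0 := by
  simp [F', pow_two, pderiv_mul, pderiv_X_of_ne (show (0:Fin 5) ≠ 3 by decide),
    pderiv_X_of_ne (show (2:Fin 5) ≠ 3 by decide)]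
lemma pdF4 : pderiv 4 F' = 0 := by
  simp [F', pow_two, pderiv_mul, pderiv_X_of_ne (show (0:Fin 5) ≠ 4 by decide),
    pderiv_X_of_ne (show (2:Fin 5) ≠ 4 by decide)]

lemma hc2 : (C (1/2:ℂ) : MvPolynomial (Fin 5) ℂ) * 2 = 1 := by
  rw [show (2:MvPolynomial (Fin 5) ℂ) = C 2 from (map_ofNat C 2).symm, ← C_mul]; norm_num
lemma hc4 : (C (1/4:ℂ) : MvPolynomial (Fin 5) ℂ) = C (1/2) * C (1/2) := by
  rw [← C_mul]; norm_num

theorem stmt_18 :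
    pb5 H' E' = 2 * E' ∧
    pb5 H' F' = -(2 * F') ∧
    pb5 E' F' = H' ∧
    pb5 H' (X 0) = 0 ∧
    pb5 H' (X 1) = 0 ∧
    pb5 E' (X 0) = 0 ∧
    pb5 E' (X 1) = 0 ∧
    pb5 F' (X 0) = 0 ∧
    pb5 F' (X 1) = 0 ∧
    pb5 (X 0) (X 1) = 2 := by
  have e01 : pderiv 0 (X 1 : MvPolynomial (Fin 5) ℂ) = 0 :=
    pderiv_X_of_ne (by decide)
  have e10 : pderiv 1 (X 0 : MvPolynomial (Fin 5) ℂ) = 0 :=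
    pderiv_X_of_ne (by decide)
  have e20 : pderiv 2 (X 0 : MvPolynomial (Fin 5) ℂ) = 0 :=
    pderiv_X_of_ne (by decide)
  have e21 : pderiv 2 (X 1 : MvPolynomial (Fin 5) ℂ) = 0 :=
    pderiv_X_of_ne (by decide)
  have e30 : pderiv 3 (X 0 : MvPolynomial (Fin 5) ℂ) = 0 :=
    pderiv_X_of_ne (by decide)
  have e31 : pderiv 3 (X 1 : MvPolynomial (Fin 5) ℂ) = 0 :=
    pderiv_X_of_ne (by decide)
  have e40 : pderiv 4 (X 0 : MvPolynomial (Fin 5) ℂ) = 0 :=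
    pderiv_X_of_ne (by decide)
  have e41 : pderiv 4 (X 1 : MvPolynomial (Fin 5) ℂ) = 0 :=
    pderiv_X_of_ne (by decide)
  refine ⟨?_, ?_, ?_, ?_, ?_, ?_, ?_, ?_, ?_, ?_⟩ <;>
    simp only [pb5, Fin.sum_univ_five, brTable, Matrix.cons_val_zero, Matrix.cons_val_one,
      Matrix.head_cons, Matrix.cons_val_two, Matrix.tail_cons, Matrix.cons_val_three,
      Matrix.cons_val_four, pdH0, pdH1, pdH2, pdH3, pdH4, pdE0, pdE1, pdE2, pdE3, pdE4,
      pdF0, pdF1, pdF2, pdF3, pdF4, pderiv_X_self, e01, e10, e20, e21, e30, e31, e40, e41] <;>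
    (try simp only [H', E', F', hc4])
  · linear_combination (C (1/2:ℂ) * X 1 ^ 2) * hc2
  · linear_combination (C (1/2:ℂ) * X 0 ^ 2) * hc2
  · linear_combination ((2 * C (1/2:ℂ) + 1) * X 4 - C (1/2:ℂ) * X 0 * X 1) * hc2
  · linear_combination (X 0 : MvPolynomial (Fin 5) ℂ) * hc2
  · linear_combination (-(X 1) : MvPolynomial (Fin 5) ℂ) * hc2
  · ring
  · ring
  · ring
  · ring
  · ring
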